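/- Let G = (V,E) be a finite, simple, undirected, connected graph, and let Q, T ⊆ V be connected vertex sets with |Q| = |T| = n and Q ∩ T = ∅. Then there exists a connected vertex set Q' ⊆ V with |Q'| = n that is reachable from Q in one step and satisfies min_{(s,t)∈Q'×T} dist(s,t) = min_{(s,t)∈Q×T} dist(s,t) − 1. -/

import Mathlib

/-!
Let `q ∈ Q`, `t ∈ T` realise `d = setDist G Q T ≥ 1`, and let `w` be the neighbour of `q` on a
shortest `q`–`t` path, so `dist w t = d - 1` and `w ∉ Q`. Take `ℓ` farthest from `q` in `G[Q]`:
shortest paths to `q` in `G[Q]` avoid `ℓ`, so `Q' = Q - ℓ + w` is connected. Along a path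
`ℓ → ⋯ → q → w` through `Q`, every agent advances one vertex (the cyclic permutation of the path's
vertex list, which fixes all other agents); as the path repeats no vertex, no two agents swap.
Every vertex of `Q'` is within one step of `Q` and `w ∈ Q'`, so `setDist G Q' T = d - 1`.
-/

open SimpleGraph

variable {V : Type*}

/-- A vertex set `Q` is connected if the subgraph of `G` induced by `Q` is connected. -/
def ConnSet (G : SimpleGraph V) (Q : Finset V) : Prop :=
  (G.induce (Q : Set V)).Connected

/-- `Q'` is reachable from `Q` in one step. -/
def OneStep (G : SimpleGraph V) (Q Q' : Finset V) : Prop :=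
  ∃ φ : {x // x ∈ Q} ≃ {x // x ∈ Q'},
    (∀ v : {x // x ∈ Q}, ((φ v : V) = (v : V)) ∨ G.Adj (v : V) ((φ v : V))) ∧
    ∀ u v : {x // x ∈ Q}, (u : V) ≠ (v : V) →
      ¬(((φ u : V) = (v : V)) ∧ ((φ v : V) = (u : V)))

/-- `min_{(a,b) ∈ A × B} dist(a,b)`. -/
noncomputable def setDist (G : SimpleGraph V) (A B : Finset V) : ℕ :=
  sInf {d | ∃ a ∈ A, ∃ b ∈ B, G.dist a b = d}

namespace SimpleGraph

variable {G : SimpleGraph V}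

lemma Reachable.exists_adj_dist_add_one_eq {u v : V} (h : G.Reachable u v) (huv : u ≠ v) :
    ∃ w, G.Adj u w ∧ G.dist w v + 1 = G.dist u v := by
  obtain ⟨p, hp⟩ := h.exists_walk_length_eq_dist
  have hnil : ¬p.Nil := Walk.not_nil_of_ne huv
  have hadj := p.adj_snd hnil
  refine ⟨p.snd, hadj, le_antisymm ?_ ?_⟩
  · have := dist_le p.tail
    have := p.length_tail_add_one hnil
    omega
  · have := hadj.reachable.dist_triangle_left v
    rw [dist_eq_one_iff_adj.mpr hadj] at this
    omega

namespace Walk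

lemma notMem_support_of_length_eq_dist_of_forall_dist_le {u v x : V}
    (hv : ∀ y, G.dist u y ≤ G.dist u v) (hxv : x ≠ v) (p : G.Walk x u)
    (hp : p.length = G.dist x u) : v ∉ p.support := by
  classical
  intro hmem
  have hsplit := congrArg length (p.take_spec hmem)
  rw [length_append] at hsplit
  have htake : (p.takeUntil v hmem).length ≠ 0 := fun h => hxv (eq_of_length_eq_zero h)
  have hdrop : G.dist v u ≤ (p.dropUntil v hmem).length := dist_le _
  have := hv x
  rw [dist_comm (u := u) (v := x), dist_comm (u := u) (v := v)] at this
  omega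

variable {u w : V} {p : G.Walk u w}

lemma exists_getVert_eq_of_mem_support_of_ne {x : V} (hx : x ∈ p.support) (hxw : x ≠ w) :
    ∃ i < p.length, p.getVert i = x := by
  obtain ⟨i, rfl, hi⟩ := mem_support_iff_exists_getVert.mp hx
  refine ⟨i, lt_of_le_of_ne hi fun h => hxw ?_, rfl⟩
  rw [h, getVert_length]

variable [DecidableEq V]

lemma IsPath.formPerm_support_getVert (hp : p.IsPath) {i : ℕ} (hi : i < p.length) :
    p.support.formPerm (p.getVert i) = p.getVert (i + 1) := by
  rw [p.getVert_eq_support_getElem hi.le, p.getVert_eq_support_getElem hi,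
    List.formPerm_apply_lt_getElem _ hp.support_nodup]

lemma IsPath.formPerm_support_eq_or_adj (hp : p.IsPath) {x : V} (hxw : x ≠ w) :
    p.support.formPerm x = x ∨ G.Adj x (p.support.formPerm x) := by
  by_cases hx : x ∈ p.support
  · obtain ⟨i, hi, rfl⟩ := exists_getVert_eq_of_mem_support_of_ne hx hxw
    rw [hp.formPerm_support_getVert hi]
    exact Or.inr (p.adj_getVert_succ hi)
  · exact Or.inl (List.formPerm_apply_of_notMem hx)

lemma IsPath.eq_of_formPerm_support_apply_eq (hp : p.IsPath) {x y : V} (hxw : x ≠ w)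
    (hyw : y ≠ w) (hxy : p.support.formPerm x = y) (hyx : p.support.formPerm y = x) :
    x = y := by
  by_cases hx : x ∈ p.support
  · obtain ⟨i, hi, rfl⟩ := exists_getVert_eq_of_mem_support_of_ne hx hxw
    rw [hp.formPerm_support_getVert hi] at hxy
    subst hxy
    have hi' : i + 1 < p.length :=
      lt_of_le_of_ne hi fun h => hyw (by rw [h, getVert_length])
    rw [hp.formPerm_support_getVert hi'] at hyx
    have := hp.getVert_injOn (by simp only [Set.mem_ofPred_eq]; omega)
      (by simp only [Set.mem_ofPred_eq]; omega) hyx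
    omega
  · rw [← hxy, List.formPerm_apply_of_notMem hx]

lemma IsPath.map_formPerm_support_eq_insert_erase (hp : p.IsPath) {Q : Finset V} (hu : u ∈ Q)
    (hw : w ∉ Q) (hpQ : ∀ x ∈ p.support, x ≠ w → x ∈ Q) :
    Q.map p.support.formPerm.toEmbedding = insert w (Q.erase u) := by
  refine Finset.eq_of_subset_of_card_le ?_ ?_
  · intro y hy
    obtain ⟨x, hxQ, rfl⟩ := Finset.mem_map.mp hy
    have hxw : x ≠ w := ne_of_mem_of_not_mem hxQ hw
    simp only [Equiv.toEmbedding_apply, Finset.mem_insert, Finset.mem_erase]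
    by_cases hx : x ∈ p.support
    · obtain ⟨i, hi, rfl⟩ := exists_getVert_eq_of_mem_support_of_ne hx hxw
      rw [hp.formPerm_support_getVert hi]
      by_cases hlast : i + 1 = p.length
      · left
        rw [hlast, getVert_length]
      · have hne : p.getVert (i + 1) ≠ w := by
          rwa [Ne, hp.getVert_eq_end_iff (by omega)]
        refine Or.inr ⟨?_, hpQ _ (p.getVert_mem_support _) hne⟩
        rw [Ne, hp.getVert_eq_start_iff (by omega)]
        omega
    · rw [List.formPerm_apply_of_notMem hx]
      exact Or.inr ⟨fun h => hx (h ▸ p.start_mem_support), hxQ⟩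
  · rw [Finset.card_map, Finset.card_insert_of_notMem (fun h => hw (Finset.mem_of_mem_erase h)),
      Finset.card_erase_add_one hu]

end Walk

lemma connected_induce_of_forall_walk {s : Set V} {w : V} (hw : w ∈ s)
    (h : ∀ x ∈ s, ∃ p : G.Walk x w, ∀ y ∈ p.support, y ∈ s) : (G.induce s).Connected := by
  have hreach : ∀ x : s, (G.induce s).Reachable x ⟨w, hw⟩ := fun ⟨x, hx⟩ => by
    obtain ⟨p, hp⟩ := h x hx
    exact ⟨p.induce s hp⟩
  have : Nonempty s := ⟨⟨w, hw⟩⟩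
  exact ⟨fun x y => (hreach x).trans (hreach y).symm⟩

end SimpleGraph

variable {G : SimpleGraph V}

lemma ConnSet.nonempty {Q : Finset V} (hQ : ConnSet G Q) : Q.Nonempty :=
  Finset.coe_nonempty.mp (Set.nonempty_coe_sort.mp (Connected.nonempty hQ))

lemma ConnSet.exists_isPath {Q : Finset V} (hQ : ConnSet G Q) {u v : V} (hu : u ∈ Q)
    (hv : v ∈ Q) : ∃ p : G.Walk u v, p.IsPath ∧ ∀ x ∈ p.support, x ∈ Q := by
  obtain ⟨p, hp⟩ := Connected.exists_isPath hQ ⟨u, hu⟩ ⟨v, hv⟩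
  refine ⟨p.map (Embedding.induce _).toHom, hp.map (Embedding.induce (G := G) _).injective,
    fun x hx => ?_⟩
  obtain ⟨y, -, rfl⟩ := List.mem_map.mp ((Walk.support_map _ _) ▸ hx)
  exact y.2

lemma ConnSet.exists_connSet_insert_erase [DecidableEq V] {Q : Finset V} (hQ : ConnSet G Q)
    {q w : V} (hq : q ∈ Q) (hqw : G.Adj q w) : ∃ ℓ ∈ Q, ConnSet G (insert w (Q.erase ℓ)) := by
  let H := G.induce (Q : Set V)
  have : Nonempty (Q : Set V) := ⟨⟨q, hq⟩⟩
  obtain ⟨ℓ, hℓ⟩ := Finite.exists_max fun x : (Q : Set V) => H.dist ⟨q, hq⟩ x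
  refine ⟨ℓ, ℓ.2, connected_induce_of_forall_walk (w := w) (by simp) fun x hx => ?_⟩
  rcases Finset.mem_insert.mp hx with rfl | hx
  · exact ⟨.nil, by simp⟩
  obtain ⟨hxℓ, hxQ⟩ := Finset.mem_erase.mp hx
  obtain ⟨p, hp⟩ := hQ.exists_walk_length_eq_dist ⟨x, hxQ⟩ ⟨q, hq⟩
  have hℓp := p.notMem_support_of_length_eq_dist_of_forall_dist_le hℓ
    (fun h => hxℓ (congrArg Subtype.val h)) hp
  let pG : G.Walk x q := p.map (Embedding.induce _).toHom
  have hpG : pG.support = p.support.map Subtype.val := Walk.support_map _ _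
  refine ⟨pG.concat hqw, fun y hy => ?_⟩
  rw [Walk.support_concat, List.mem_append, hpG, List.mem_singleton] at hy
  rcases hy with hy | rfl
  · obtain ⟨z, hz, rfl⟩ := List.mem_map.mp hy
    refine Finset.mem_insert_of_mem (Finset.mem_erase.mpr ⟨fun h => hℓp ?_, z.2⟩)
    rwa [← Subtype.ext h]
  · simp

lemma oneStep_map_perm {Q : Finset V} (σ : Equiv.Perm V)
    (hmove : ∀ x ∈ Q, σ x = x ∨ G.Adj x (σ x))
    (hswap : ∀ x ∈ Q, ∀ y ∈ Q, σ x = y → σ y = x → x = y) :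
    OneStep G Q (Q.map σ.toEmbedding) :=
  ⟨σ.subtypeEquiv fun _ => (Finset.mem_map' σ.toEmbedding).symm, fun v => hmove v v.2,
    fun u v huv ⟨h₁, h₂⟩ => huv (hswap u u.2 v v.2 h₁ h₂)⟩

lemma oneStep_insert_erase_of_isPath [DecidableEq V] {Q : Finset V} {u v w : V}
    {p : G.Walk u v} (hp : p.IsPath) (hpQ : ∀ x ∈ p.support, x ∈ Q) (hvw : G.Adj v w)
    (hw : w ∉ Q) : OneStep G Q (insert w (Q.erase u)) := by
  have hpw : (p.concat hvw).IsPath := hp.concat (fun h => hw (hpQ w h)) hvw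
  have hpwQ : ∀ x ∈ (p.concat hvw).support, x ≠ w → x ∈ Q := fun x hx hxw => by
    rw [Walk.support_concat, List.mem_append, List.mem_singleton] at hx
    exact hpQ x (hx.resolve_right hxw)
  rw [← hpw.map_formPerm_support_eq_insert_erase (hpQ u p.start_mem_support) hw hpwQ]
  exact oneStep_map_perm _
    (fun x hx => hpw.formPerm_support_eq_or_adj (ne_of_mem_of_not_mem hx hw))
    (fun x hx y hy => hpw.eq_of_formPerm_support_apply_eq (ne_of_mem_of_not_mem hx hw)
      (ne_of_mem_of_not_mem hy hw))

lemma OneStep.exists_dist_le_one {Q Q' : Finset V} (h : OneStep G Q Q') {a' : V}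
    (ha' : a' ∈ Q') : ∃ a ∈ Q, G.dist a a' ≤ 1 := by
  obtain ⟨φ, hmove, -⟩ := h
  obtain ⟨a, ha⟩ := φ.surjective ⟨a', ha'⟩
  refine ⟨a, a.2, ?_⟩
  rcases hmove a with hstay | hadj
  · simp [← hstay, ha]
  · rw [ha] at hadj
    exact (dist_eq_one_iff_adj.mpr hadj).le

variable (G) in
lemma setDist_le {A B : Finset V} {a b : V} (ha : a ∈ A) (hb : b ∈ B) :
    setDist G A B ≤ G.dist a b :=
  Nat.sInf_le ⟨a, ha, b, hb, rfl⟩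

variable (G) in
lemma exists_dist_eq_setDist {A B : Finset V} (hA : A.Nonempty) (hB : B.Nonempty) :
    ∃ a ∈ A, ∃ b ∈ B, G.dist a b = setDist G A B := by
  obtain ⟨a, ha⟩ := hA
  obtain ⟨b, hb⟩ := hB
  exact Nat.sInf_mem (s := {d | ∃ a ∈ A, ∃ b ∈ B, G.dist a b = d}) ⟨_, a, ha, b, hb, rfl⟩

lemma setDist_le_setDist_add (hG : G.Connected) {A A' B : Finset V} {k : ℕ}
    (hA' : A'.Nonempty) (hB : B.Nonempty) (h : ∀ a' ∈ A', ∃ a ∈ A, G.dist a a' ≤ k) :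
    setDist G A B ≤ setDist G A' B + k := by
  obtain ⟨a', ha', b, hb, hab⟩ := exists_dist_eq_setDist G hA' hB
  obtain ⟨a, ha, haa'⟩ := h a' ha'
  calc setDist G A B ≤ G.dist a b := setDist_le G ha hb
    _ ≤ G.dist a a' + G.dist a' b := hG.dist_triangle
    _ ≤ setDist G A' B + k := by omega

theorem stmt8_general [DecidableEq V] (G : SimpleGraph V) (hG : G.Connected)
    (n : ℕ) (Q T : Finset V)
    (hQconn : ConnSet G Q) (hTconn : ConnSet G T)
    (hQcard : Q.card = n)
    (hdisj : Q ∩ T = ∅) :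
    ∃ Q' : Finset V, Q'.card = n ∧ ConnSet G Q' ∧ OneStep G Q Q' ∧
      setDist G Q' T = setDist G Q T - 1 := by
  obtain ⟨q, hq, t, ht, hqt⟩ := exists_dist_eq_setDist G hQconn.nonempty hTconn.nonempty
  have hqt_ne : q ≠ t := fun h =>
    Finset.notMem_empty q (hdisj ▸ Finset.mem_inter.mpr ⟨hq, h ▸ ht⟩)
  obtain ⟨w, hqw, hwt⟩ := (hG q t).exists_adj_dist_add_one_eq hqt_ne
  have hwQ : w ∉ Q := fun hw => by have := setDist_le G hw ht; omega
  obtain ⟨ℓ, hℓ, hconn⟩ := hQconn.exists_connSet_insert_erase hq hqw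
  obtain ⟨p, hp, hpQ⟩ := hQconn.exists_isPath hℓ hq
  have hstep := oneStep_insert_erase_of_isPath hp hpQ hqw hwQ
  refine ⟨insert w (Q.erase ℓ), ?_, hconn, hstep, ?_⟩
  · rw [Finset.card_insert_of_notMem (fun h => hwQ (Finset.mem_of_mem_erase h)),
      Finset.card_erase_add_one hℓ, hQcard]
  · have hle := setDist_le G (Finset.mem_insert_self w (Q.erase ℓ)) ht
    have hge := setDist_le_setDist_add hG (Finset.insert_nonempty w (Q.erase ℓ))
      hTconn.nonempty fun _ => hstep.exists_dist_le_one
    omega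

/-- If `Q` and `T` are disjoint connected vertex sets of size `n`, there is a
connected vertex set `Q'` of size `n`, reachable from `Q` in one step, whose
distance to `T` is exactly one less than that of `Q`. -/
theorem stmt8 [Fintype V] [DecidableEq V] (G : SimpleGraph V) (hG : G.Connected)
    (n : ℕ) (Q T : Finset V)
    (hQconn : ConnSet G Q) (hTconn : ConnSet G T)
    (hQcard : Q.card = n) (hTcard : T.card = n)
    (hdisj : Q ∩ T = ∅) :
    ∃ Q' : Finset V, Q'.card = n ∧ ConnSet G Q' ∧ OneStep G Q Q' ∧
      setDist G Q' T = setDist G Q T - 1 :=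
  stmt8_general G hG n Q T hQconn hTconn hQcard hdisj
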